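/- arXiv:1805.11756 — 3 statements merged into one kernel-verified Lean document; each statement's English description precedes it below -/
import Mathlib

section
/- Let 0 < p < 1 and φ(z) = |Im z| + |z|^p on ℂ. Then the function z ↦ cos(z/2) belongs to H²(ℂ, e^{-φ}), i.e., ∫_ℂ |cos(z/2)|² e^{-|Im z| − |z|^p} dλ(z) < ∞. -/
open MeasureTheory Metric Filter
open scoped ENNReal Real

noncomputable section

/-- A real-valued function `φ` is *subharmonic* on a set `U ⊆ ℂ` if it is upper
semicontinuous on `U` and satisfies the sub-mean value inequality on every closed disc
contained in `U`. -/
def SubharmonicOn (φ : ℂ → ℝ) (U : Set ℂ) : Prop :=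
  UpperSemicontinuousOn φ U ∧
    ∀ z ∈ U, ∀ r : ℝ, 0 < r → Metric.closedBall z r ⊆ U →
      φ z ≤ (2 * Real.pi)⁻¹ *
        ∫ θ in (0:ℝ)..(2 * Real.pi), φ (z + r * Complex.exp (θ * Complex.I))

/-- A real-valued function `h` is *harmonic* on a set `U ⊆ ℂ` if it is continuous on `U`
and satisfies the mean value equality on every closed disc contained in `U`. -/
def HarmonicOn (h : ℂ → ℝ) (U : Set ℂ) : Prop :=
  ContinuousOn h U ∧
    ∀ z ∈ U, ∀ r : ℝ, 0 < r → Metric.closedBall z r ⊆ U →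
      h z = (2 * Real.pi)⁻¹ *
        ∫ θ in (0:ℝ)..(2 * Real.pi), h (z + r * Complex.exp (θ * Complex.I))

/-- The squared weighted `L²` norm `∫_A |f|² e^{-φ} dλ` (as an extended real). -/
def wNorm2 (φ : ℂ → ℝ) (A : Set ℂ) (f : ℂ → ℂ) : ℝ≥0∞ :=
  ∫⁻ z in A, ENNReal.ofReal (‖f z‖ ^ 2 * Real.exp (-φ z))

/-- Membership in the weighted Bergman space `H²(Ω, e^{-φ})`. -/
def MemH2 (φ : ℂ → ℝ) (Ω : Set ℂ) (f : ℂ → ℂ) : Prop :=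
  DifferentiableOn ℂ f Ω ∧ wNorm2 φ Ω f < ⊤

/-- The holomorphic polynomials lying in `H²(Ω, e^{-φ})` are dense in `H²(Ω, e^{-φ})`. -/
def PolyDense (φ : ℂ → ℝ) (Ω : Set ℂ) : Prop :=
  ∀ f : ℂ → ℂ, MemH2 φ Ω f → ∀ ε : ℝ, 0 < ε → ∃ P : Polynomial ℂ,
    wNorm2 φ Ω (fun z => P.eval z) < ⊤ ∧
    wNorm2 φ Ω (fun z => f z - P.eval z) < ENNReal.ofReal ε

/-- A Jordan curve: a subset of `ℂ` homeomorphic to the unit circle. -/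
def IsJordanCurve (Γ : Set ℂ) : Prop :=
  Nonempty (Γ ≃ₜ (Metric.sphere (0:ℂ) 1 : Set ℂ))

/-- A bounded Carathéodory domain: a bounded simply connected domain whose boundary is
also the boundary of an unbounded domain. -/
def IsBoundedCaratheodory (Ω : Set ℂ) : Prop :=
  IsOpen Ω ∧ IsConnected Ω ∧ Bornology.IsBounded Ω ∧ SimplyConnectedSpace ↥Ω ∧
    ∃ W : Set ℂ, IsOpen W ∧ IsConnected W ∧ ¬ Bornology.IsBounded W ∧ frontier Ω = frontier W

/-- An unbounded Carathéodory domain: an unbounded domain whose image under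
`z ↦ (z - z₀)⁻¹`, for some `z₀ ∉ closure Ω`, is a bounded Carathéodory domain. -/
def IsUnboundedCaratheodory (Ω : Set ℂ) : Prop :=
  IsOpen Ω ∧ IsConnected Ω ∧ ¬ Bornology.IsBounded Ω ∧
    ∃ z₀ : ℂ, z₀ ∉ closure Ω ∧ IsBoundedCaratheodory ((fun z => (z - z₀)⁻¹) '' Ω)

/-- A bounded Jordan domain: a bounded domain whose boundary is a Jordan curve. -/
def IsJordanDomain (Ω : Set ℂ) : Prop :=
  IsOpen Ω ∧ IsConnected Ω ∧ Bornology.IsBounded Ω ∧ IsJordanCurve (frontier Ω)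

/-- A moon-shaped domain with multiple boundary point `Q`: a bounded domain whose
boundary consists of two Jordan curves having exactly the point `Q` in common. -/
def IsMoonShaped (Ω : Set ℂ) (Q : ℂ) : Prop :=
  IsOpen Ω ∧ IsConnected Ω ∧ Bornology.IsBounded Ω ∧
    ∃ Γ₁ Γ₂ : Set ℂ, IsJordanCurve Γ₁ ∧ IsJordanCurve Γ₂ ∧
      frontier Ω = Γ₁ ∪ Γ₂ ∧ Γ₁ ∩ Γ₂ = {Q}

/-- A moon-shaped domain bounded by two circles: the region between an outer circle and
an internally tangent inner circle. -/
def IsTwoCircleMoon (Ω : Set ℂ) : Prop :=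
  ∃ (c₁ c₂ : ℂ) (r₁ r₂ : ℝ), 0 < r₂ ∧ r₂ < r₁ ∧ dist c₁ c₂ = r₁ - r₂ ∧
    Ω = Metric.ball c₁ r₁ \ Metric.closedBall c₂ r₂

/-- `μ` is the Riesz measure `(1/2π)Δφ` of a subharmonic function `φ`, expressed through
the Riesz decomposition: on every bounded open set `U`, `φ` is the logarithmic potential
of `μ|_U` plus a harmonic function on `U`. -/
def IsRieszMeasureOf (μ : Measure ℂ) (φ : ℂ → ℝ) : Prop :=
  ∀ U : Set ℂ, IsOpen U → Bornology.IsBounded U →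
    ∃ h : ℂ → ℝ, HarmonicOn h U ∧
      ∀ z ∈ U, φ z = (∫ ζ in U, Real.log ‖z - ζ‖ ∂μ) + h z

/-! The bound `|cos (z/2)|² ≤ e^{|Im z|}` cancels the harmonic part `|Im z|` of the weight,
leaving `e^{-|z|^p}`, which is integrable for every `p > 0`: in polar coordinates its
integral is a Gamma integral. -/

theorem MeasureTheory.integrable_exp_neg_norm_rpow {E : Type*} [NormedAddCommGroup E]
    [NormedSpace ℝ E] [FiniteDimensional ℝ E] [MeasurableSpace E] [BorelSpace E]
    (μ : Measure E) [μ.IsAddHaarMeasure] {p : ℝ} (hp : 0 < p) :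
    Integrable (fun x : E => Real.exp (-‖x‖ ^ p)) μ := by
  obtain _ | _ := subsingleton_or_nontrivial E
  · exact Integrable.of_finite
  rw [integrable_fun_norm_addHaar μ (f := fun y => Real.exp (-y ^ p))]
  refine (integrableOn_rpow_mul_exp_neg_rpow (s := (Module.finrank ℝ E - 1 : ℕ))
    (neg_one_lt_zero.trans_le (Nat.cast_nonneg _)) hp).congr_fun
    (fun y _ => ?_) measurableSet_Ioi
  simp only [Real.rpow_natCast, smul_eq_mul]

theorem Complex.norm_cos_le_exp_abs_im (w : ℂ) : ‖cos w‖ ≤ Real.exp |w.im| := by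
  have norm_exp_mul_I_le (u : ℂ) : ‖exp (u * I)‖ ≤ Real.exp |u.im| := by
    rw [norm_exp, mul_I_re]
    exact Real.exp_le_exp.2 (neg_le_abs _)
  calc ‖cos w‖ = ‖exp (w * I) + exp (-w * I)‖ / 2 := by
        rw [cos, norm_div, RCLike.norm_ofNat]
    _ ≤ (Real.exp |w.im| + Real.exp |(-w).im|) / 2 := by
        gcongr
        exact (norm_add_le _ _).trans (add_le_add (norm_exp_mul_I_le w) (norm_exp_mul_I_le (-w)))
    _ = Real.exp |w.im| := by rw [neg_im, abs_neg]; ring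

theorem norm_cos_half_sq_mul_exp_le (p : ℝ) (z : ℂ) :
    ‖Complex.cos (z / 2)‖ ^ 2 * Real.exp (-(|z.im| + ‖z‖ ^ p)) ≤ Real.exp (-‖z‖ ^ p) := by
  have hcos : ‖Complex.cos (z / 2)‖ ^ 2 ≤ Real.exp |z.im| := by
    calc ‖Complex.cos (z / 2)‖ ^ 2 ≤ Real.exp (|z.im| / 2) ^ 2 := by
          gcongr
          simpa [abs_div] using Complex.norm_cos_le_exp_abs_im (z / 2)
      _ = Real.exp |z.im| := by rw [← Real.exp_nat_mul]; ring_nf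
  calc ‖Complex.cos (z / 2)‖ ^ 2 * Real.exp (-(|z.im| + ‖z‖ ^ p))
      ≤ Real.exp |z.im| * Real.exp (-(|z.im| + ‖z‖ ^ p)) := by gcongr
    _ = Real.exp (-‖z‖ ^ p) := by rw [← Real.exp_add]; ring_nf

theorem stmt_9_general (p : ℝ) (hp0 : 0 < p) :
    ∫⁻ z : ℂ, ENNReal.ofReal
        (‖Complex.cos (z / 2)‖ ^ 2 * Real.exp (-(|z.im| + ‖z‖ ^ p))) < ⊤ :=
  calc ∫⁻ z : ℂ, ENNReal.ofReal
        (‖Complex.cos (z / 2)‖ ^ 2 * Real.exp (-(|z.im| + ‖z‖ ^ p)))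
      ≤ ∫⁻ z : ℂ, ENNReal.ofReal (Real.exp (-‖z‖ ^ p)) :=
        lintegral_mono fun z => ENNReal.ofReal_le_ofReal (norm_cos_half_sq_mul_exp_le p z)
    _ < ⊤ := (integrable_exp_neg_norm_rpow volume hp0).lintegral_lt_top

/-- Let `0 < p < 1` and `φ(z) = |Im z| + |z|^p` on `ℂ`.  Then
`z ↦ cos (z/2)` belongs to `H²(ℂ, e^{-φ})`, i.e.
`∫_ℂ |cos (z/2)|² e^{-|Im z| - |z|^p} dλ(z) < ∞`. -/
theorem stmt_9 (p : ℝ) (hp0 : 0 < p) (hp1 : p < 1) :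
    ∫⁻ z : ℂ, ENNReal.ofReal
        (‖Complex.cos (z / 2)‖ ^ 2 * Real.exp (-(|z.im| + ‖z‖ ^ p))) < ⊤ :=
  stmt_9_general p hp0

end
end

section
/- Let Ω be a bounded domain in ℂ, φ a subharmonic function on Ω such that the constant function 1 belongs to H²(Ω, e^{-φ}) (i.e., ∫_Ω e^{-φ} dλ < ∞), and let p ∈ Ω. Suppose that for each integer n ≥ 0 there exists f_n ∈ H²(Ω, e^{-φ}) with ‖f_n‖_{Ω,φ} = 1 and Taylor expansion f_n(z) = a_n (z − p)^n + O((z − p)^{n+1}) at p, where a_n > 0 is maximal among all such unit-norm functions vanishing to order n at p. Then {f_n}_{n=0}^{∞} is an orthonormal basis of the Hilbert space H²(Ω, e^{-φ}). -/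
open MeasureTheory Metric Filter
open scoped ENNReal Real

noncomputable section

/-!
The extremal property makes `f n` a normalized reproducing kernel for the `n`-th derivative at
`p`: writing `A = n! a_n`, every `g` in the space vanishing to order `n` at `p` satisfies
`A ⟨g, f n⟩ = g⁽ⁿ⁾(p)`. This is a first-variation argument: by homogeneity the extremal
property reads `|h⁽ⁿ⁾(p)|² ≤ A² ‖h‖²` for all `h` vanishing to order `n`, and testing it on
`h = f n + ε g` for small `ε` forces the linear term in `ε` to vanish. Since `f m` vanishes to
order `m`, this gives `⟨f m, f n⟩ = 0` for `n < m`; and a `g` orthogonal to every `f n` has,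
inductively, all derivatives at `p` equal to zero, so it vanishes on the connected set `Ω`.
-/

open scoped ComplexConjugate

lemma UpperSemicontinuousOn.aemeasurable_restrict {α : Type*} [TopologicalSpace α]
    [MeasurableSpace α] [OpensMeasurableSpace α] {μ : Measure α} {s : Set α} {φ : α → ℝ}
    (hφ : UpperSemicontinuousOn φ s) (hs : MeasurableSet s) : AEMeasurable φ (μ.restrict s) := by
  rw [aemeasurable_restrict_iff_comap_subtype hs]
  exact (upperSemicontinuousOn_iff_restrict.mpr hφ).measurable.aemeasurable

lemma Complex.norm_add_mul_sq (a b c : ℂ) :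
    ‖a + c * b‖ ^ 2 = ‖a‖ ^ 2 + 2 * (c * (b * conj a)).re + ‖c‖ ^ 2 * ‖b‖ ^ 2 := by
  simp only [← Complex.normSq_eq_norm_sq, Complex.normSq_apply, Complex.add_re,
    Complex.add_im, Complex.mul_re, Complex.mul_im, Complex.conj_re, Complex.conj_im]
  ring

lemma Complex.norm_add_mul_sq_mul_ofReal (a b c : ℂ) (r : ℝ) :
    ‖a + c * b‖ ^ 2 * r =
      ‖a‖ ^ 2 * r + 2 * (c * (b * conj a * (r : ℂ))).re + ‖c‖ ^ 2 * (‖b‖ ^ 2 * r) := by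
  rw [Complex.norm_add_mul_sq, ← mul_assoc, ← mul_assoc, Complex.re_mul_ofReal, mul_assoc]
  ring

lemma Complex.eq_zero_of_forall_re_mul_le {e : ℂ} {K : ℝ}
    (h : ∀ ε : ℂ, (ε * e).re ≤ ‖ε‖ ^ 2 * K) : e = 0 := by
  set t : ℝ := (2 * (|K| + 1))⁻¹
  have ht : 0 < t := by positivity
  have htK : t * K ≤ 1 / 2 := by
    calc t * K ≤ t * |K| := by gcongr; exact le_abs_self K
      _ ≤ 1 / 2 := by
        rw [inv_mul_le_iff₀ (by positivity)]
        linarith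
  -- test `h` at `ε = t ē`: the left side is linear in `t`, the right side quadratic
  have key := h (t * conj e)
  rw [mul_assoc, Complex.conj_mul', ← Complex.ofReal_pow, ← Complex.ofReal_mul,
    Complex.ofReal_re, norm_mul, Complex.norm_conj, Complex.norm_real, Real.norm_of_nonneg ht.le]
    at key
  have hte : 0 ≤ t * ‖e‖ ^ 2 := by positivity
  have : t * ‖e‖ ^ 2 ≤ t * ‖e‖ ^ 2 * (1 / 2) :=
    calc t * ‖e‖ ^ 2 ≤ t * ‖e‖ ^ 2 * (t * K) := by linarith
      _ ≤ t * ‖e‖ ^ 2 * (1 / 2) := by gcongr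
  have : t * ‖e‖ ^ 2 = 0 := by linarith
  simpa [ht.ne'] using this

section WeightedL2

variable {α : Type*} [MeasurableSpace α] {μ : Measure α} {w : α → ℝ} {u v : α → ℂ}

lemma integral_mul_conj_self_mul_weight :
    ∫ x, u x * conj (u x) * (w x : ℂ) ∂μ = ((∫ x, ‖u x‖ ^ 2 * w x ∂μ : ℝ) : ℂ) := by
  simp_rw [Complex.mul_conj', ← Complex.ofReal_pow, ← Complex.ofReal_mul]
  exact integral_ofReal

lemma integral_mul_conj_mul_weight_comm :
    ∫ x, u x * conj (v x) * (w x : ℂ) ∂μ = conj (∫ x, v x * conj (u x) * (w x : ℂ) ∂μ) := by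
  rw [← integral_conj]
  congr 1 with x
  simp only [map_mul, Complex.conj_conj, Complex.conj_ofReal]
  ring

lemma integrable_mul_conj_mul_weight (hw : AEMeasurable w μ) (hw0 : ∀ x, 0 ≤ w x)
    (hu : AEStronglyMeasurable u μ) (hv : AEStronglyMeasurable v μ)
    (hui : Integrable (fun x => ‖u x‖ ^ 2 * w x) μ)
    (hvi : Integrable (fun x => ‖v x‖ ^ 2 * w x) μ) :
    Integrable (fun x => u x * conj (v x) * (w x : ℂ)) μ := by
  refine (hui.add hvi).mono'
    ((hu.mul (Complex.continuous_conj.comp_aestronglyMeasurable hv)).mul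
      (Complex.measurable_ofReal.comp_aemeasurable hw).aestronglyMeasurable)
    (.of_forall fun x => ?_)
  rw [norm_mul, norm_mul, Complex.norm_conj, Complex.norm_real, Real.norm_of_nonneg (hw0 x)]
  have := two_mul_le_add_sq ‖u x‖ ‖v x‖
  simp only [Pi.add_apply]
  nlinarith [hw0 x, mul_nonneg (norm_nonneg (u x)) (norm_nonneg (v x))]

variable (hw : AEMeasurable w μ) (hw0 : ∀ x, 0 ≤ w x)
    (hu : AEStronglyMeasurable u μ) (hv : AEStronglyMeasurable v μ)
    (hui : Integrable (fun x => ‖u x‖ ^ 2 * w x) μ)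
    (hvi : Integrable (fun x => ‖v x‖ ^ 2 * w x) μ) (c : ℂ)
include hw hw0 hu hv hui hvi

lemma integrable_norm_add_mul_sq_mul_weight :
    Integrable (fun x => ‖u x + c * v x‖ ^ 2 * w x) μ := by
  have hcross := (integrable_mul_conj_mul_weight hw hw0 hv hu hvi hui).const_mul c
  refine ((hui.add (hcross.re.const_mul 2)).add (hvi.const_mul (‖c‖ ^ 2))).congr
    (.of_forall fun x => ?_)
  exact (Complex.norm_add_mul_sq_mul_ofReal (u x) (v x) c (w x)).symm

lemma integral_norm_add_mul_sq_mul_weight :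
    ∫ x, ‖u x + c * v x‖ ^ 2 * w x ∂μ =
      ∫ x, ‖u x‖ ^ 2 * w x ∂μ + 2 * (c * ∫ x, v x * conj (u x) * (w x : ℂ) ∂μ).re
        + ‖c‖ ^ 2 * ∫ x, ‖v x‖ ^ 2 * w x ∂μ := by
  have hcross : Integrable (fun x => c * (v x * conj (u x) * (w x : ℂ))) μ :=
    (integrable_mul_conj_mul_weight hw hw0 hv hu hvi hui).const_mul c
  have hre2 : Integrable (fun x => 2 * (c * (v x * conj (u x) * (w x : ℂ))).re) μ :=
    hcross.re.const_mul 2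
  have hre : ∫ x, (c * (v x * conj (u x) * (w x : ℂ))).re ∂μ
      = (c * ∫ x, v x * conj (u x) * (w x : ℂ) ∂μ).re := by
    rw [← integral_const_mul]
    exact integral_re hcross
  simp_rw [Complex.norm_add_mul_sq_mul_ofReal]
  rw [integral_add ?_ (hvi.const_mul _), integral_add hui hre2,
    integral_const_mul, integral_const_mul, hre]
  exact hui.add hre2

end WeightedL2

section Extremal

variable {Ω : Set ℂ} {w : ℂ → ℝ} {p : ℂ} {n : ℕ} {A : ℝ} {f g u : ℂ → ℂ}

lemma iteratedDeriv_add_const_mul_of_differentiableOn (hΩ : IsOpen Ω) (hp : p ∈ Ω)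
    (hf : DifferentiableOn ℂ f Ω) (hg : DifferentiableOn ℂ g Ω) (c : ℂ) (n : ℕ) :
    iteratedDeriv n (fun z => f z + c * g z) p = iteratedDeriv n f p + c * iteratedDeriv n g p := by
  have hg' : ContDiffAt ℂ n (c * g ·) p :=
    contDiffAt_const.mul ((hg.analyticAt (hΩ.mem_nhds hp)).contDiffAt)
  rw [iteratedDeriv_fun_add ((hf.analyticAt (hΩ.mem_nhds hp)).contDiffAt) hg',
    iteratedDeriv_const_mul_field]

lemma eqOn_zero_of_integral_norm_sq_mul_weight_eq_zero (hΩ : IsOpen Ω) (hw : ∀ z, 0 < w z)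
    (hu : ContinuousOn u Ω) (hui : Integrable (fun z => ‖u z‖ ^ 2 * w z) (volume.restrict Ω))
    (h0 : ∫ z in Ω, ‖u z‖ ^ 2 * w z = 0) : Set.EqOn u 0 Ω := by
  have hae := (integral_eq_zero_iff_of_nonneg
    (fun z => mul_nonneg (sq_nonneg ‖u z‖) (hw z).le) hui).mp h0
  refine Measure.eqOn_open_of_ae_eq (μ := volume) ?_ hΩ hu continuousOn_const
  filter_upwards [hae] with z hz
  simpa [(hw z).ne'] using hz

variable (hΩ : IsOpen Ω) (hp : p ∈ Ω) (hw0 : ∀ z, 0 < w z)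
  (hmax : ∀ g : ℂ → ℂ, DifferentiableOn ℂ g Ω →
    Integrable (fun z => ‖g z‖ ^ 2 * w z) (volume.restrict Ω) →
    ∫ z in Ω, ‖g z‖ ^ 2 * w z = 1 → (∀ k < n, iteratedDeriv k g p = 0) →
    ‖iteratedDeriv n g p‖ ≤ A)
include hΩ hp hw0 hmax

lemma norm_iteratedDeriv_sq_le_of_forall_norm_iteratedDeriv_le
    (hu : DifferentiableOn ℂ u Ω) (hui : Integrable (fun z => ‖u z‖ ^ 2 * w z) (volume.restrict Ω))
    (huvan : ∀ k < n, iteratedDeriv k u p = 0) :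
    ‖iteratedDeriv n u p‖ ^ 2 ≤ A ^ 2 * ∫ z in Ω, ‖u z‖ ^ 2 * w z := by
  set N := ∫ z in Ω, ‖u z‖ ^ 2 * w z
  rcases (integral_nonneg fun z => mul_nonneg (sq_nonneg ‖u z‖) (hw0 z).le : 0 ≤ N).eq_or_lt
    with hN | hN
  · have hu0 := eqOn_zero_of_integral_norm_sq_mul_weight_eq_zero hΩ hw0 hu.continuousOn hui hN.symm
    have hev : u =ᶠ[nhds p] 0 := Filter.eventually_of_mem (hΩ.mem_nhds hp) hu0
    rw [(hev.iteratedDeriv n).eq_of_nhds, show N = 0 from hN.symm]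
    simp
  set s : ℝ := (Real.sqrt N)⁻¹
  have hs : 0 < s := by positivity
  have hsN : s ^ 2 * N = 1 := by
    rw [inv_pow, Real.sq_sqrt hN.le, inv_mul_cancel₀ hN.ne']
  have hscaled : ∀ z, ‖(s : ℂ) * u z‖ ^ 2 * w z = s ^ 2 * (‖u z‖ ^ 2 * w z) := fun z => by
    rw [norm_mul, Complex.norm_real, Real.norm_of_nonneg hs.le]
    ring
  have hbound := hmax (fun z => (s : ℂ) * u z) (hu.const_mul _)
    ((hui.const_mul (s ^ 2)).congr (.of_forall fun z => (hscaled z).symm))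
    (by simp_rw [hscaled]; rw [integral_const_mul, hsN])
    (fun k hk => by rw [iteratedDeriv_const_mul_field, huvan k hk, mul_zero])
  rw [iteratedDeriv_const_mul_field, norm_mul, Complex.norm_real, Real.norm_of_nonneg hs.le]
    at hbound
  calc ‖iteratedDeriv n u p‖ ^ 2 = (s * ‖iteratedDeriv n u p‖) ^ 2 * N := by
        rw [mul_pow, mul_comm (s ^ 2), mul_assoc, hsN, mul_one]
    _ ≤ A ^ 2 * N := by gcongr

lemma mul_integral_mul_conj_eq_iteratedDeriv_of_extremal (hw : AEMeasurable w (volume.restrict Ω))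
    (hA : 0 < A) (hf : DifferentiableOn ℂ f Ω)
    (hfi : Integrable (fun z => ‖f z‖ ^ 2 * w z) (volume.restrict Ω))
    (hf1 : ∫ z in Ω, ‖f z‖ ^ 2 * w z = 1) (hfvan : ∀ k < n, iteratedDeriv k f p = 0)
    (hfA : iteratedDeriv n f p = A) (hg : DifferentiableOn ℂ g Ω)
    (hgi : Integrable (fun z => ‖g z‖ ^ 2 * w z) (volume.restrict Ω))
    (hgvan : ∀ k < n, iteratedDeriv k g p = 0) :
    A * ∫ z in Ω, g z * conj (f z) * (w z : ℂ) = iteratedDeriv n g p := by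
  set c := ∫ z in Ω, g z * conj (f z) * (w z : ℂ)
  set D := iteratedDeriv n g p
  set N := ∫ z in Ω, ‖g z‖ ^ 2 * w z
  have hfm : AEStronglyMeasurable f (volume.restrict Ω) :=
    hf.continuousOn.aestronglyMeasurable hΩ.measurableSet
  have hgm : AEStronglyMeasurable g (volume.restrict Ω) :=
    hg.continuousOn.aestronglyMeasurable hΩ.measurableSet
  have hw0' : ∀ z, 0 ≤ w z := fun z => (hw0 z).le
  have hvar : ∀ ε : ℂ, (ε * (D - A * c)).re ≤ ‖ε‖ ^ 2 * (A * N / 2) := by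
    intro ε
    have hbound := norm_iteratedDeriv_sq_le_of_forall_norm_iteratedDeriv_le hΩ hp hw0 hmax
      (u := fun z => f z + ε * g z) (hf.add (hg.const_mul ε))
      (integrable_norm_add_mul_sq_mul_weight hw hw0' hfm hgm hfi hgi ε)
      (fun k hk => by
        rw [iteratedDeriv_add_const_mul_of_differentiableOn hΩ hp hf hg, hfvan k hk, hgvan k hk,
          mul_zero, add_zero])
    rw [iteratedDeriv_add_const_mul_of_differentiableOn hΩ hp hf hg, hfA,
      integral_norm_add_mul_sq_mul_weight hw hw0' hfm hgm hfi hgi, hf1,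
      Complex.norm_add_mul_sq, Complex.conj_ofReal, Complex.norm_real, Real.norm_eq_abs, sq_abs,
      ← mul_assoc, Complex.re_mul_ofReal] at hbound
    have hre : (ε * (D - A * c)).re = (ε * D).re - A * (ε * c).re := by
      rw [mul_sub, Complex.sub_re, mul_left_comm, Complex.re_ofReal_mul]
    rw [hre]
    nlinarith [sq_nonneg ‖ε‖, sq_nonneg ‖D‖, mul_nonneg (sq_nonneg ‖ε‖) (sq_nonneg ‖D‖)]
  have := Complex.eq_zero_of_forall_re_mul_le hvar
  linear_combination -this

end Extremal

lemma DifferentiableOn.eqOn_zero_of_iteratedDeriv_eq_zero {Ω : Set ℂ} {p : ℂ} {g : ℂ → ℂ}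
    (hg : DifferentiableOn ℂ g Ω) (hΩo : IsOpen Ω) (hΩc : IsPreconnected Ω) (hp : p ∈ Ω)
    (h : ∀ n, iteratedDeriv n g p = 0) : Set.EqOn g 0 Ω := by
  have hana := hg.analyticOnNhd hΩo
  refine hana.eqOn_zero_of_preconnected_of_eventuallyEq_zero hΩc hp ?_
  refine analyticOrderAt_eq_top.mp (ENat.eq_top_iff_forall_ge.mpr fun m => ?_)
  exact (natCast_le_analyticOrderAt_iff_iteratedDeriv_eq_zero (hana p hp)).mpr fun i _ => h i

theorem stmt_15_general (Ω : Set ℂ) (hΩo : IsOpen Ω) (hΩc : IsConnected Ω)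
    (φ : ℂ → ℝ) (hφ : SubharmonicOn φ Ω)
    (p : ℂ) (hp : p ∈ Ω)
    (f : ℕ → ℂ → ℂ) (a : ℕ → ℝ)
    (hfhol : ∀ n, DifferentiableOn ℂ (f n) Ω)
    (hfint : ∀ n, Integrable (fun z => ‖f n z‖ ^ 2 * Real.exp (-φ z)) (volume.restrict Ω))
    (hfnorm : ∀ n, (∫ z in Ω, ‖f n z‖ ^ 2 * Real.exp (-φ z)) = 1)
    (hvanish : ∀ n, ∀ k < n, iteratedDeriv k (f n) p = 0)
    (hapos : ∀ n, 0 < a n)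
    (hcoeff : ∀ n, iteratedDeriv n (f n) p = ((n.factorial : ℂ)) * ((a n : ℝ) : ℂ))
    (hmax : ∀ n, ∀ g : ℂ → ℂ, DifferentiableOn ℂ g Ω →
      Integrable (fun z => ‖g z‖ ^ 2 * Real.exp (-φ z)) (volume.restrict Ω) →
      (∫ z in Ω, ‖g z‖ ^ 2 * Real.exp (-φ z)) = 1 →
      (∀ k < n, iteratedDeriv k g p = 0) →
      ‖iteratedDeriv n g p‖ ≤ (n.factorial : ℝ) * a n) :
    (∀ m n : ℕ,
      (∫ z in Ω, f m z * (starRingEnd ℂ) (f n z) * (Real.exp (-φ z) : ℂ)) =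
        if m = n then 1 else 0) ∧
    (∀ g : ℂ → ℂ, DifferentiableOn ℂ g Ω →
      Integrable (fun z => ‖g z‖ ^ 2 * Real.exp (-φ z)) (volume.restrict Ω) →
      (∀ n : ℕ,
        (∫ z in Ω, g z * (starRingEnd ℂ) (f n z) * (Real.exp (-φ z) : ℂ)) = 0) →
      ∀ z ∈ Ω, g z = 0) := by
  have hw : AEMeasurable (fun z => Real.exp (-φ z)) (volume.restrict Ω) :=
    (hφ.1.aemeasurable_restrict hΩo.measurableSet).neg.exp
  have hA : ∀ n, 0 < (n.factorial : ℝ) * a n := fun n => mul_pos (by positivity) (hapos n)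
  have hreproducing : ∀ n g, DifferentiableOn ℂ g Ω →
      Integrable (fun z => ‖g z‖ ^ 2 * Real.exp (-φ z)) (volume.restrict Ω) →
      (∀ k < n, iteratedDeriv k g p = 0) →
      ((n.factorial * a n : ℝ) : ℂ) * ∫ z in Ω, g z * conj (f n z) * (Real.exp (-φ z) : ℂ)
        = iteratedDeriv n g p := fun n g hg hgi hgvan =>
    mul_integral_mul_conj_eq_iteratedDeriv_of_extremal hΩo hp (fun z => Real.exp_pos _) (hmax n)
      hw (hA n) (hfhol n) (hfint n) (hfnorm n) (hvanish n) (by rw [hcoeff n]; push_cast; ring)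
      hg hgi hgvan
  have horth : ∀ m n, n < m →
      ∫ z in Ω, f m z * conj (f n z) * (Real.exp (-φ z) : ℂ) = 0 := fun m n hnm => by
    have h := hreproducing n (f m) (hfhol m) (hfint m) fun k hk => hvanish m k (hk.trans hnm)
    rw [hvanish m n hnm] at h
    exact (mul_eq_zero.mp h).resolve_left (by exact_mod_cast (hA n).ne')
  refine ⟨fun m n => ?_, fun g hg hgi hgorth => ?_⟩
  · rcases lt_trichotomy m n with h | rfl | h
    · rw [integral_mul_conj_mul_weight_comm, horth n m h, map_zero, if_neg h.ne]
    · rw [integral_mul_conj_self_mul_weight, hfnorm, if_pos rfl, Complex.ofReal_one]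
    · rw [horth m n h, if_neg h.ne']
  · refine hg.eqOn_zero_of_iteratedDeriv_eq_zero hΩo hΩc.isPreconnected hp fun n => ?_
    induction n using Nat.strong_induction_on with
    | _ n ih => rw [← hreproducing n g hg hgi ih, hgorth n, mul_zero]

/-- Let `Ω` be a bounded domain, `φ` subharmonic on `Ω` with
`1 ∈ H²(Ω, e^{-φ})`, and `p ∈ Ω`.  Suppose for each `n` there is `f n ∈ H²(Ω, e^{-φ})` of
unit norm vanishing to order `n` at `p`, with `n`-th Taylor coefficient `a n > 0` maximal
among all unit-norm functions vanishing to order `n` at `p`.  Then `{f n}` is an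
orthonormal basis of `H²(Ω, e^{-φ})`: it is an orthonormal system, and any member of
`H²(Ω, e^{-φ})` orthogonal to every `f n` vanishes identically. -/
theorem stmt_15 (Ω : Set ℂ) (hΩo : IsOpen Ω) (hΩc : IsConnected Ω)
    (hΩb : Bornology.IsBounded Ω)
    (φ : ℂ → ℝ) (hφ : SubharmonicOn φ Ω)
    (h1 : ∫⁻ z in Ω, ENNReal.ofReal (Real.exp (-φ z)) < ⊤)
    (p : ℂ) (hp : p ∈ Ω)
    (f : ℕ → ℂ → ℂ) (a : ℕ → ℝ)
    (hfhol : ∀ n, DifferentiableOn ℂ (f n) Ω)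
    (hfint : ∀ n, Integrable (fun z => ‖f n z‖ ^ 2 * Real.exp (-φ z)) (volume.restrict Ω))
    (hfnorm : ∀ n, (∫ z in Ω, ‖f n z‖ ^ 2 * Real.exp (-φ z)) = 1)
    (hvanish : ∀ n, ∀ k < n, iteratedDeriv k (f n) p = 0)
    (hapos : ∀ n, 0 < a n)
    (hcoeff : ∀ n, iteratedDeriv n (f n) p = ((n.factorial : ℂ)) * ((a n : ℝ) : ℂ))
    (hmax : ∀ n, ∀ g : ℂ → ℂ, DifferentiableOn ℂ g Ω →
      Integrable (fun z => ‖g z‖ ^ 2 * Real.exp (-φ z)) (volume.restrict Ω) →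
      (∫ z in Ω, ‖g z‖ ^ 2 * Real.exp (-φ z)) = 1 →
      (∀ k < n, iteratedDeriv k g p = 0) →
      ‖iteratedDeriv n g p‖ ≤ (n.factorial : ℝ) * a n) :
    (∀ m n : ℕ,
      (∫ z in Ω, f m z * (starRingEnd ℂ) (f n z) * (Real.exp (-φ z) : ℂ)) =
        if m = n then 1 else 0) ∧
    (∀ g : ℂ → ℂ, DifferentiableOn ℂ g Ω →
      Integrable (fun z => ‖g z‖ ^ 2 * Real.exp (-φ z)) (volume.restrict Ω) →
      (∀ n : ℕ,
        (∫ z in Ω, g z * (starRingEnd ℂ) (f n z) * (Real.exp (-φ z) : ℂ)) = 0) →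
      ∀ z ∈ Ω, g z = 0) :=
  stmt_15_general Ω hΩo hΩc φ hφ p hp f a hfhol hfint hfnorm hvanish hapos hcoeff hmax
end
end

section
/- Let K ⊂ ℂ be a compact polynomially convex set. Then there exists a subharmonic function γ on ℂ with γ = 0 on K and γ > 0 on ℂ \ K. -/
open MeasureTheory Metric Filter
open scoped ENNReal Real

noncomputable section

/-!
For each `q ∉ K` the polynomial `P` separating `q` from `K` yields the peak function
`max 0 (‖P‖ - max_K ‖P‖)`: continuous, sub-mean-valued on circles (because `‖P‖` is, by the mean
value property of holomorphic functions), zero on `K` and positive at `q`. By Lindelöf countably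
many of them have positivity sets covering `ℂ \ K`, and a weighted sum of these, with weights
small enough to make the series converge locally uniformly, is the required `γ`.
-/

open Real Topology Polynomial

def HasSubmeanProperty (f : ℂ → ℝ) : Prop :=
  ∀ c : ℂ, ∀ R : ℝ, f c ≤ circleAverage f c R

namespace HasSubmeanProperty

variable {f g : ℂ → ℝ}

theorem subharmonicOn_univ (hf : HasSubmeanProperty f) (hf_usc : UpperSemicontinuous f) :
    SubharmonicOn f Set.univ :=
  ⟨hf_usc.upperSemicontinuousOn _, fun c _ R _ _ => hf c R⟩

theorem const (a : ℝ) : HasSubmeanProperty fun _ => a := fun c R => (circleAverage_const a c R).ge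

theorem sub_const (hf : HasSubmeanProperty f) (hf_cont : Continuous f) (a : ℝ) :
    HasSubmeanProperty fun z => f z - a := fun c R => by
  show f c - a ≤ _
  rw [circleAverage_fun_sub hf_cont.continuousOn.circleIntegrable'
    (circleIntegrable_const a c R), circleAverage_const]
  exact sub_le_sub_right (hf c R) a

theorem max (hf : HasSubmeanProperty f) (hg : HasSubmeanProperty g) (hf_cont : Continuous f)
    (hg_cont : Continuous g) : HasSubmeanProperty fun z => Max.max (f z) (g z) := fun c R => by
  have hfg : CircleIntegrable (fun z => Max.max (f z) (g z)) c R :=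
    (hf_cont.max hg_cont).continuousOn.circleIntegrable'
  exact max_le
    ((hf c R).trans <| circleAverage_mono hf_cont.continuousOn.circleIntegrable' hfg
      fun z _ => le_max_left _ _)
    ((hg c R).trans <| circleAverage_mono hg_cont.continuousOn.circleIntegrable' hfg
      fun z _ => le_max_right _ _)

theorem const_mul (hf : HasSubmeanProperty f) {a : ℝ} (ha : 0 ≤ a) :
    HasSubmeanProperty fun z => a * f z := fun c R => by
  show a * f c ≤ circleAverage (fun z => a • f z) c R
  rw [circleAverage_fun_smul, smul_eq_mul]
  exact mul_le_mul_of_nonneg_left (hf c R) ha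

/-- Nonnegativity lets each partial sum be compared with the full sum on the circle. -/
theorem tsum {f : ℕ → ℂ → ℝ} (hf : ∀ n, HasSubmeanProperty (f n))
    (hf_cont : ∀ n, Continuous (f n)) (hf_nonneg : ∀ n z, 0 ≤ f n z)
    (hf_sum : ∀ z, Summable fun n => f n z) (h_cont : Continuous fun z => ∑' n, f n z) :
    HasSubmeanProperty fun z => ∑' n, f n z := fun c R => by
  have partial_le :
      ∀ N, ∑ n ∈ Finset.range N, f n c ≤ circleAverage (fun z => ∑' n, f n z) c R :=
    fun N => calc
      ∑ n ∈ Finset.range N, f n c ≤ ∑ n ∈ Finset.range N, circleAverage (f n) c R :=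
        Finset.sum_le_sum fun n _ => hf n c R
      _ = circleAverage (fun z => ∑ n ∈ Finset.range N, f n z) c R :=
        (circleAverage_fun_sum fun n _ => (hf_cont n).continuousOn.circleIntegrable').symm
      _ ≤ circleAverage (fun z => ∑' n, f n z) c R :=
        circleAverage_mono
          (continuous_finsetSum _ fun n _ => hf_cont n).continuousOn.circleIntegrable'
          h_cont.continuousOn.circleIntegrable'
          fun z _ => (hf_sum z).sum_le_tsum _ fun n _ => hf_nonneg n z
  exact le_of_tendsto' (hf_sum c).hasSum.tendsto_sum_nat partial_le

end HasSubmeanProperty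

theorem Differentiable.hasSubmeanProperty_norm {f : ℂ → ℂ} (hf : Differentiable ℂ f) :
    HasSubmeanProperty fun z => ‖f z‖ := fun c R => by
  show ‖f c‖ ≤ _
  rw [← hf.diffContOnCl.circleAverage (c := c) (R := R), circleAverage_def, circleAverage_def,
    norm_smul, smul_eq_mul, Real.norm_of_nonneg (by positivity)]
  exact mul_le_mul_of_nonneg_left
    (intervalIntegral.norm_integral_le_integral_norm two_pi_pos.le) (by positivity)

/-- The weights make `c n * f n` at most `2⁻ⁿ` on the `n`-th set of a compact exhaustion. -/
theorem exists_pos_weights_continuous_tsum {X : Type*} [TopologicalSpace X]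
    [WeaklyLocallyCompactSpace X] [SigmaCompactSpace X] {f : ℕ → X → ℝ}
    (hf : ∀ n, Continuous (f n)) :
    ∃ c : ℕ → ℝ, (∀ n, 0 < c n) ∧ (∀ x, Summable fun n => c n * f n x) ∧
      Continuous fun x => ∑' n, c n * f n x := by
  let K := CompactExhaustion.choice X
  choose C hC using fun n => (K.isCompact n).exists_bound_of_continuousOn (hf n).continuousOn
  set c : ℕ → ℝ := fun n => (1 / 2) ^ n / (1 + |C n|)
  have hc_pos : ∀ n, 0 < c n := fun n => by positivity
  have hc_bound : ∀ m n, m ≤ n → ∀ x ∈ K m, ‖c n * f n x‖ ≤ (1 / 2) ^ n := by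
    intro m n hmn x hx
    rw [norm_mul, Real.norm_of_nonneg (hc_pos n).le, div_mul_eq_mul_div,
      div_le_iff₀ (by positivity)]
    gcongr
    exact (hC n x (K.subset hmn hx)).trans
      ((le_abs_self _).trans (le_add_of_nonneg_left zero_le_one))
  refine ⟨c, hc_pos, fun x => ?_, continuous_iff_continuousAt.2 fun x => ?_⟩
  · obtain ⟨m, hm⟩ := K.exists_mem x
    exact .of_norm_bounded_eventually_nat summable_geometric_two
      (eventually_atTop.2 ⟨m, fun n hn => hc_bound m n hn x hm⟩)
  · obtain ⟨m, hm⟩ := K.exists_mem_nhds x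
    have := tendstoUniformlyOn_tsum_nat_eventually summable_geometric_two
      (eventually_atTop.2 ⟨m, fun n hn => hc_bound m n hn⟩)
    refine (this.continuousOn (Frequently.of_forall fun N => ?_)).continuousAt hm
    exact (continuous_finsetSum _ fun n _ => continuous_const.mul (hf n)).continuousOn

theorem HasSubmeanProperty.exists_positive_combination {f : ℕ → ℂ → ℝ}
    (hf : ∀ n, HasSubmeanProperty (f n)) (hf_cont : ∀ n, Continuous (f n))
    (hf_nonneg : ∀ n z, 0 ≤ f n z) :
    ∃ g : ℂ → ℝ, Continuous g ∧ HasSubmeanProperty g ∧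
      (∀ z, (∀ n, f n z = 0) → g z = 0) ∧ ∀ z n, 0 < f n z → 0 < g z := by
  obtain ⟨c, hc_pos, hsum, hcont⟩ := exists_pos_weights_continuous_tsum hf_cont
  have hterm_nonneg : ∀ n z, 0 ≤ c n * f n z :=
    fun n z => mul_nonneg (hc_pos n).le (hf_nonneg n z)
  refine ⟨_, hcont, .tsum (fun n => (hf n).const_mul (hc_pos n).le)
    (fun n => continuous_const.mul (hf_cont n)) hterm_nonneg hsum hcont, fun z hz => ?_,
    fun z n hn => (hsum z).tsum_pos (fun k => hterm_nonneg k z) n (mul_pos (hc_pos n) hn)⟩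
  simp only [hz, mul_zero, tsum_zero]

theorem IsCompact.exists_lt_forall_le {X : Type*} [TopologicalSpace X] {K : Set X}
    (hK : IsCompact K) {g : X → ℝ} (hg : ContinuousOn g K) {a : ℝ}
    (h : ∀ x ∈ K, g x < a) : ∃ M < a, ∀ x ∈ K, g x ≤ M := by
  rcases K.eq_empty_or_nonempty with rfl | hne
  · exact ⟨a - 1, by linarith, by simp⟩
  · obtain ⟨x₀, hx₀, hmax⟩ := hK.exists_isMaxOn hne hg
    exact ⟨g x₀, h x₀ hx₀, hmax⟩

theorem exists_peak_function {K : Set ℂ} (hK : IsCompact K) {P : ℂ[X]} {q : ℂ}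
    (hP : ∀ z ∈ K, ‖P.eval z‖ < ‖P.eval q‖) :
    ∃ u : ℂ → ℝ, Continuous u ∧ HasSubmeanProperty u ∧ (∀ z, 0 ≤ u z) ∧
      (∀ z ∈ K, u z = 0) ∧ 0 < u q := by
  have hnorm_cont : Continuous fun z => ‖P.eval z‖ := P.continuous.norm
  obtain ⟨M, hMq, hMK⟩ := hK.exists_lt_forall_le hnorm_cont.continuousOn hP
  refine ⟨fun z => max 0 (‖P.eval z‖ - M),
    continuous_const.max (hnorm_cont.sub continuous_const),
    (HasSubmeanProperty.const 0).max (P.differentiable.hasSubmeanProperty_norm.sub_const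
      hnorm_cont M) continuous_const (hnorm_cont.sub continuous_const),
    fun z => le_max_left _ _, fun z hz => max_eq_left (sub_nonpos.2 (hMK z hz)),
    lt_max_of_lt_right (sub_pos.2 hMq)⟩

theorem exists_seq_subset_iUnion {X : Type*} [TopologicalSpace X] [SecondCountableTopology X]
    {s : Set X} (hs : s.Nonempty) {V : X → Set X} (hV : ∀ x ∈ s, V x ∈ 𝓝[s] x) :
    ∃ q : ℕ → X, (∀ n, q n ∈ s) ∧ s ⊆ ⋃ n, V (q n) := by
  obtain ⟨t, hts, htc, hcover⟩ := TopologicalSpace.countable_cover_nhdsWithin hV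
  obtain ⟨x₀, hx₀⟩ := hs
  obtain ⟨q, hq⟩ := (htc.insert x₀).exists_eq_range (Set.insert_nonempty _ _)
  refine ⟨q, fun n => Set.insert_subset hx₀ hts (hq ▸ Set.mem_range_self n), fun x hx => ?_⟩
  obtain ⟨y, hy, hxy⟩ := Set.mem_iUnion₂.1 (hcover hx)
  obtain ⟨n, rfl⟩ : y ∈ Set.range q := hq ▸ Set.mem_insert_of_mem _ hy
  exact Set.mem_iUnion.2 ⟨n, hxy⟩

/-- Let `K ⊆ ℂ` be a compact polynomially convex set (for every
`q ∉ K` there is a polynomial `P` with `|P| < |P q|` on `K`).  Then there exists a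
subharmonic function `γ` on `ℂ` with `γ = 0` on `K` and `γ > 0` on `ℂ \ K`. -/
theorem stmt_16 (K : Set ℂ) (hK : IsCompact K)
    (hpc : ∀ q : ℂ, q ∉ K → ∃ P : Polynomial ℂ,
      ∀ z ∈ K, ‖P.eval z‖ < ‖P.eval q‖) :
    ∃ γ : ℂ → ℝ, SubharmonicOn γ Set.univ ∧
      (∀ z ∈ K, γ z = 0) ∧ (∀ z ∉ K, 0 < γ z) := by
  choose! u hu_cont hu_sub hu_nonneg hu_K hu_pos using
    fun q (hq : q ∉ K) => exists_peak_function hK (hpc q hq).choose_spec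
  obtain ⟨q, hqK, hcover⟩ := exists_seq_subset_iUnion (Set.nonempty_compl.2 hK.ne_univ)
    (V := fun q => {z | 0 < u q z}) fun q hq =>
      mem_nhdsWithin_of_mem_nhds ((hu_cont q hq).isOpen_preimage _ isOpen_Ioi |>.mem_nhds
        (hu_pos q hq))
  obtain ⟨γ, hγ_cont, hγ_sub, hγ_K, hγ_pos⟩ :=
    HasSubmeanProperty.exists_positive_combination (fun n => hu_sub _ (hqK n))
      (fun n => hu_cont _ (hqK n)) (fun n => hu_nonneg _ (hqK n))
  refine ⟨γ, hγ_sub.subharmonicOn_univ hγ_cont.upperSemicontinuous,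
    fun z hz => hγ_K z fun n => hu_K _ (hqK n) z hz, fun z hz => ?_⟩
  obtain ⟨n, hn⟩ := Set.mem_iUnion.1 (hcover hz)
  exact hγ_pos z n hn

end
end
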